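/- If A = [a₁, a₂, ..., a_m] and B = [b₁, b₂, ..., b_n] are the losing score lists of some [h-k]-bipartite hypertournament (with m ≥ h > 1 and n ≥ k > 1), and if a_i < a_j for some indices i < j, then the sequence A' = [a₁, ..., a_i + 1, ..., a_j − 1, ..., a_m] together with B is again the pair of losing score lists of some [h-k]-bipartite hypertournament on vertex sets of sizes m and n. -/

import Mathlib

/-!
Reordering the entries of one arc gives again a hypertournament, and moves one loss from the old
last entry of the arc to the new one. Let `x`, `y` lie on the same side, with `x` losing fewer arcs
than `y`, and let `φ` swap them. The vertex sets `φ(e)`, for the arcs `e` lost by `y`, are pairwise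
distinct, so the arcs on them cannot all be lost by `x`: some arc `e` lost by `y` has a partner `f`
on `φ(e)` not lost by `x`. If `x ∈ e`, reorder `e` to end with `x`. Otherwise the last entry `z` of
`f` lies in `e` as well; reorder `e` to end with `z`, then `f` to end with `x`.
-/

/-- An [h-k]-bipartite hypertournament on vertex sets `Fin m` and `Fin n`. -/
structure BipartiteHypertournament (m n h k : ℕ) where
  arcs : Finset (List (Fin m ⊕ Fin n))
  nodup : ∀ e ∈ arcs, e.Nodup
  left_count : ∀ e ∈ arcs, (e.filter (fun x => x.isLeft)).length = h
  right_count : ∀ e ∈ arcs, (e.filter (fun x => x.isRight)).length = k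
  complete : ∀ (U₁ : Finset (Fin m)) (V₁ : Finset (Fin n)), U₁.card = h → V₁.card = k →
    ∃! e, e ∈ arcs ∧ e.toFinset = U₁.image Sum.inl ∪ V₁.image Sum.inr

/-- The losing score of a vertex `w`: the number of arcs containing `w` in which
`w` is the last entry. -/
def losingScore {m n h k : ℕ} (H : BipartiteHypertournament m n h k)
    (w : Fin m ⊕ Fin n) : ℕ :=
  (H.arcs.filter (fun e => e.getLast? = some w)).card

/-- `a` (on indices `< m`) and `b` (on indices `< n`) list, up to order, the losing
scores of the vertices of `U` and of `V` respectively, of some [h-k]-bipartite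
hypertournament. -/
def IsLosingScoreLists (m n h k : ℕ) (a b : ℕ → ℕ) : Prop :=
  ∃ (H : BipartiteHypertournament m n h k) (σ : Equiv.Perm (Fin m)) (τ : Equiv.Perm (Fin n)),
    (∀ i : Fin m, a i.val = losingScore H (Sum.inl (σ i))) ∧
    (∀ j : Fin n, b j.val = losingScore H (Sum.inr (τ j)))

open Finset

section Sum

variable {α β : Type*} [DecidableEq α] [DecidableEq β]

theorem List.card_toLeft_toFinset {l : List (α ⊕ β)} (hl : l.Nodup) :
    #l.toFinset.toLeft = (l.filter (·.isLeft)).length := by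
  rw [← List.toFinset_card_of_nodup (hl.filter _), ← card_map .inl]
  congr 1
  ext x
  cases x <;> simp

theorem List.card_toRight_toFinset {l : List (α ⊕ β)} (hl : l.Nodup) :
    #l.toFinset.toRight = (l.filter (·.isRight)).length := by
  rw [← List.toFinset_card_of_nodup (hl.filter _), ← card_map .inr]
  congr 1
  ext x
  cases x <;> simp

theorem Finset.image_inl_toLeft_union_image_inr_toRight (u : Finset (α ⊕ β)) :
    u.toLeft.image Sum.inl ∪ u.toRight.image Sum.inr = u := by
  ext x
  cases x <;> simp

theorem Finset.toLeft_image_sumCongr (u : Finset (α ⊕ β)) (σ : Equiv.Perm α) (τ : Equiv.Perm β) :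
    (u.image (Equiv.sumCongr σ τ)).toLeft = u.toLeft.image σ := by
  ext a
  simp only [mem_toLeft, mem_image]
  constructor
  · rintro ⟨a' | b', hx, hxa⟩
    · exact ⟨a', hx, Sum.inl_injective hxa⟩
    · simp at hxa
  · rintro ⟨b, hb, rfl⟩
    exact ⟨_, hb, rfl⟩

theorem Finset.toRight_image_sumCongr (u : Finset (α ⊕ β)) (σ : Equiv.Perm α) (τ : Equiv.Perm β) :
    (u.image (Equiv.sumCongr σ τ)).toRight = u.toRight.image τ := by
  ext a
  simp only [mem_toRight, mem_image]
  constructor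
  · rintro ⟨a' | b', hx, hxa⟩
    · simp at hxa
    · exact ⟨b', hx, Sum.inr_injective hxa⟩
  · rintro ⟨b, hb, rfl⟩
    exact ⟨_, hb, rfl⟩

theorem Equiv.exists_sumCongr_eq_swap {x y : α ⊕ β} (hxy : x.isLeft = y.isLeft) :
    ∃ (σ : Equiv.Perm α) (τ : Equiv.Perm β), Equiv.sumCongr σ τ = Equiv.swap x y := by
  rcases x with a | b <;> rcases y with a' | b'
  · exact ⟨_, _, Equiv.Perm.sumCongr_swap_refl a a'⟩
  · simp at hxy
  · simp at hxy
  · exact ⟨_, _, Equiv.Perm.sumCongr_refl_swap b b'⟩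

end Sum

theorem List.erase_append_singleton_perm {α : Type*} [DecidableEq α] {l : List α} {x : α}
    (hx : x ∈ l) : (l.erase x ++ [x]).Perm l :=
  (List.perm_append_singleton _ _).trans (List.perm_cons_erase hx).symm

namespace BipartiteHypertournament

variable {m n h k : ℕ} (H : BipartiteHypertournament m n h k)

theorem existsUnique_mem_arcs_toFinset_eq {S : Finset (Fin m ⊕ Fin n)} (hl : #S.toLeft = h)
    (hr : #S.toRight = k) : ∃! e, e ∈ H.arcs ∧ e.toFinset = S := by
  simpa only [image_inl_toLeft_union_image_inr_toRight] using H.complete _ _ hl hr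

theorem card_toLeft_toFinset {e : List (Fin m ⊕ Fin n)} (he : e ∈ H.arcs) :
    #e.toFinset.toLeft = h := by
  rw [List.card_toLeft_toFinset (H.nodup e he), H.left_count e he]

theorem card_toRight_toFinset {e : List (Fin m ⊕ Fin n)} (he : e ∈ H.arcs) :
    #e.toFinset.toRight = k := by
  rw [List.card_toRight_toFinset (H.nodup e he), H.right_count e he]

theorem injOn_toFinset : Set.InjOn List.toFinset (H.arcs : Set (List (Fin m ⊕ Fin n))) :=
  fun _ he _ hf hef => (H.existsUnique_mem_arcs_toFinset_eq (H.card_toLeft_toFinset he)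
    (H.card_toRight_toFinset he)).unique ⟨he, rfl⟩ ⟨hf, hef.symm⟩

theorem exists_mem_arcs_toFinset_eq_image_swap {e : List (Fin m ⊕ Fin n)} (he : e ∈ H.arcs)
    {x y : Fin m ⊕ Fin n} (hxy : x.isLeft = y.isLeft) :
    ∃ f ∈ H.arcs, f.toFinset = e.toFinset.image (Equiv.swap x y) := by
  obtain ⟨σ, τ, hστ⟩ := Equiv.exists_sumCongr_eq_swap hxy
  obtain ⟨f, ⟨hf, hfe⟩, -⟩ := H.existsUnique_mem_arcs_toFinset_eq
    (S := e.toFinset.image (Equiv.sumCongr σ τ))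
    (by rw [toLeft_image_sumCongr, card_image_of_injective _ σ.injective,
      H.card_toLeft_toFinset he])
    (by rw [toRight_image_sumCongr, card_image_of_injective _ τ.injective,
      H.card_toRight_toFinset he])
  exact ⟨f, hf, hστ ▸ hfe⟩


theorem losingScore_le_of_forall_exists (φ : Equiv.Perm (Fin m ⊕ Fin n)) {x y : Fin m ⊕ Fin n}
    (hφ : ∀ e ∈ H.arcs, e.getLast? = some y →
      ∃ f ∈ H.arcs, f.toFinset = e.toFinset.image φ ∧ f.getLast? = some x) :
    losingScore H y ≤ losingScore H x := by
  unfold losingScore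
  calc #(H.arcs.filter (·.getLast? = some y))
      = #((H.arcs.filter (·.getLast? = some y)).image (·.toFinset.image φ)) := by
        refine (card_image_of_injOn fun e he f hf hef => ?_).symm
        exact H.injOn_toFinset (filter_subset _ _ he) (filter_subset _ _ hf)
          (image_injective φ.injective hef)
    _ ≤ #((H.arcs.filter (·.getLast? = some x)).image List.toFinset) := by
        refine card_le_card fun S hS => ?_
        obtain ⟨e, he, rfl⟩ := mem_image.1 hS
        obtain ⟨he, hey⟩ := mem_filter.1 he
        obtain ⟨f, hf, hfe, hfx⟩ := hφ e he hey
        exact mem_image.2 ⟨f, mem_filter.2 ⟨hf, hfx⟩, hfe⟩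
    _ ≤ _ := card_image_le

def reorderArc {g g' : List (Fin m ⊕ Fin n)} (hg : g ∈ H.arcs) (hperm : g'.Perm g) :
    BipartiteHypertournament m n h k where
  arcs := insert g' (H.arcs.erase g)
  nodup e he := by
    rcases mem_insert.1 he with rfl | he
    · exact hperm.nodup_iff.2 (H.nodup g hg)
    · exact H.nodup e (mem_of_mem_erase he)
  left_count e he := by
    rcases mem_insert.1 he with rfl | he
    · rw [(hperm.filter _).length_eq, H.left_count g hg]
    · exact H.left_count e (mem_of_mem_erase he)
  right_count e he := by
    rcases mem_insert.1 he with rfl | he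
    · rw [(hperm.filter _).length_eq, H.right_count g hg]
    · exact H.right_count e (mem_of_mem_erase he)
  complete U₁ V₁ hU hV := by
    obtain ⟨a, ⟨ha, haS⟩, huniq⟩ := H.complete U₁ V₁ hU hV
    have hg'g := List.toFinset_eq_of_perm _ _ hperm
    by_cases hag : a = g
    · subst hag
      refine ⟨g', ⟨mem_insert_self _ _, hg'g.trans haS⟩, ?_⟩
      rintro b ⟨hb, hbS⟩
      rcases mem_insert.1 hb with rfl | hb
      · rfl
      · exact absurd (huniq b ⟨mem_of_mem_erase hb, hbS⟩) (ne_of_mem_erase hb)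
    · refine ⟨a, ⟨mem_insert_of_mem (mem_erase.2 ⟨hag, ha⟩), haS⟩, ?_⟩
      rintro b ⟨hb, hbS⟩
      rcases mem_insert.1 hb with rfl | hb
      · exact absurd (huniq g ⟨hg, hg'g ▸ hbS⟩).symm hag
      · exact huniq b ⟨mem_of_mem_erase hb, hbS⟩

/-- `H'` arises from `H` by moving one loss from `y` to `x` (stated without truncated
subtraction). -/
def ShiftsLoss (H' : BipartiteHypertournament m n h k) (y x : Fin m ⊕ Fin n) : Prop :=
  ∀ w, losingScore H' w + (if w = y then 1 else 0) = losingScore H w + (if w = x then 1 else 0)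

theorem ShiftsLoss.trans {H₁ H₂ H₃ : BipartiteHypertournament m n h k} {x y z : Fin m ⊕ Fin n}
    (h₁₂ : H₁.ShiftsLoss H₂ y z) (h₂₃ : H₂.ShiftsLoss H₃ z x) : H₁.ShiftsLoss H₃ y x := by
  intro w
  have := h₁₂ w
  have := h₂₃ w
  split_ifs at * <;> omega

theorem shiftsLoss_reorderArc {g g' : List (Fin m ⊕ Fin n)} (hg : g ∈ H.arcs)
    (hperm : g'.Perm g) {x y : Fin m ⊕ Fin n} (hy : g.getLast? = some y)
    (hx : g'.getLast? = some x) : H.ShiftsLoss (H.reorderArc hg hperm) y x := by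
  intro w
  have hg' : g' ∉ H.arcs.erase g := fun hg' => ne_of_mem_erase hg'
    (H.injOn_toFinset (mem_of_mem_erase hg') hg (List.toFinset_eq_of_perm _ _ hperm))
  have hg'w : g'.getLast? = some w ↔ w = x := by rw [hx, Option.some.injEq, eq_comm]
  simp only [losingScore, reorderArc, filter_insert, filter_erase, hg'w]
  set s := H.arcs.filter (·.getLast? = some w)
  have hgw : g ∈ s ↔ w = y := by simp [s, hg, hy, eq_comm]
  have hcard : #(s.erase g) + (if w = y then 1 else 0) = #s := by
    split_ifs with hwy
    · exact card_erase_add_one (hgw.2 hwy)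
    · rw [erase_eq_of_notMem (hgw.not.2 hwy), add_zero]
  have hins : #(insert g' (s.erase g)) = #(s.erase g) + 1 :=
    card_insert_of_notMem fun h' => hg' (erase_subset_erase g (filter_subset _ _) h')
  split_ifs at hcard ⊢ <;> omega

theorem exists_shiftsLoss_of_mem {g : List (Fin m ⊕ Fin n)} (hg : g ∈ H.arcs)
    {x y : Fin m ⊕ Fin n} (hy : g.getLast? = some y) (hx : x ∈ g) :
    ∃ H' : BipartiteHypertournament m n h k,
      (∀ a ∈ H.arcs, a ≠ g → a ∈ H'.arcs) ∧ H.ShiftsLoss H' y x :=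
  ⟨H.reorderArc hg (List.erase_append_singleton_perm hx),
    fun _ ha hag => mem_insert_of_mem (mem_erase.2 ⟨hag, ha⟩),
    H.shiftsLoss_reorderArc hg _ hy (by simp)⟩

theorem exists_shiftsLoss_of_losingScore_lt {x y : Fin m ⊕ Fin n} (hxy : x.isLeft = y.isLeft)
    (hlt : losingScore H x < losingScore H y) :
    ∃ H' : BipartiteHypertournament m n h k, H.ShiftsLoss H' y x := by
  obtain ⟨e, he, hey, f, hf, hfe, hfx⟩ : ∃ e ∈ H.arcs, e.getLast? = some y ∧
      ∃ f ∈ H.arcs, f.toFinset = e.toFinset.image (Equiv.swap x y) ∧ f.getLast? ≠ some x := by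
    by_contra! hcon
    refine hlt.not_ge (H.losingScore_le_of_forall_exists (Equiv.swap x y) fun e he hey => ?_)
    obtain ⟨f, hf, hfe⟩ := H.exists_mem_arcs_toFinset_eq_image_swap he hxy
    exact ⟨f, hf, hfe, hcon e he hey f hf hfe⟩
  by_cases hxe : x ∈ e
  · exact (H.exists_shiftsLoss_of_mem he hey hxe).imp fun _ => And.right
  have hye : y ∈ e := List.mem_of_getLast? hey
  have hxf : x ∈ f := by
    rw [← List.mem_toFinset, hfe]
    exact mem_image.2 ⟨y, List.mem_toFinset.2 hye, Equiv.swap_apply_right x y⟩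
  obtain ⟨z, hfz⟩ : ∃ z, f.getLast? = some z :=
    Option.isSome_iff_exists.1 (List.getLast?_isSome.2 (List.ne_nil_of_mem hxf))
  have hze : z ∈ e := by
    have hzf : z ∈ f.toFinset := List.mem_toFinset.2 (List.mem_of_getLast? hfz)
    obtain ⟨z', hz'e, rfl⟩ := mem_image.1 (hfe ▸ hzf)
    have hz'y : z' ≠ y := by
      rintro rfl
      exact hfx (by rwa [Equiv.swap_apply_right] at hfz)
    rw [Equiv.swap_apply_of_ne_of_ne (ne_of_mem_of_not_mem (List.mem_toFinset.1 hz'e) hxe) hz'y]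
    exact List.mem_toFinset.1 hz'e
  obtain ⟨H₁, hH₁, h₁⟩ := H.exists_shiftsLoss_of_mem he hey hze
  obtain ⟨H₂, -, h₂⟩ := H₁.exists_shiftsLoss_of_mem (hH₁ f hf (ne_of_mem_of_not_mem' hxf hxe)) hfz hxf
  exact ⟨H₂, h₁.trans h₂⟩

end BipartiteHypertournament

theorem losing_score_lists_exchange_general (m n h k : ℕ) (a b : ℕ → ℕ)
    (hab : IsLosingScoreLists m n h k a b)
    (i j : ℕ) (hij : i < j) (hjm : j < m) (haij : a i < a j) :
    IsLosingScoreLists m n h k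
      (fun t => if t = i then a i + 1 else if t = j then a j - 1 else a t) b := by
  obtain ⟨H, σ, τ, hA, hB⟩ := hab
  have hi : i < m := hij.trans hjm
  obtain ⟨H', hH'⟩ := H.exists_shiftsLoss_of_losingScore_lt (x := .inl (σ ⟨i, hi⟩))
    (y := .inl (σ ⟨j, hjm⟩)) rfl (by rw [← hA, ← hA]; exact haij)
  refine ⟨H', σ, τ, fun t => ?_, fun t => ?_⟩
  · have hshift := hH' (.inl (σ t))
    have ht := hA t
    simp only [Sum.inl.injEq, σ.injective.eq_iff, Fin.ext_iff] at hshift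
    dsimp only
    split_ifs at hshift ⊢ <;> subst_vars <;> omega
  · simpa [hB t] using (hH' (.inr (τ t))).symm

/-- Lemma 2.2: if `a`, `b` are the losing score lists of an [h-k]-bipartite
hypertournament and `a i < a j` with `i < j`, then the lists obtained by replacing
`a i` by `a i + 1` and `a j` by `a j - 1` are again losing score lists of some
[h-k]-bipartite hypertournament. (Sequences are 0-indexed.) -/
theorem losing_score_lists_exchange (m n h k : ℕ) (hh : 1 < h) (hm : h ≤ m)
    (hk : 1 < k) (hn : k ≤ n) (a b : ℕ → ℕ)
    (ha : ∀ i j, i ≤ j → j < m → a i ≤ a j)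
    (hb : ∀ i j, i ≤ j → j < n → b i ≤ b j)
    (hab : IsLosingScoreLists m n h k a b)
    (i j : ℕ) (hij : i < j) (hjm : j < m) (haij : a i < a j) :
    IsLosingScoreLists m n h k
      (fun t => if t = i then a i + 1 else if t = j then a j - 1 else a t) b :=
  losing_score_lists_exchange_general m n h k a b hab i j hij hjm haij
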